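/- arXiv:1304.1169 — 2 statements merged into one kernel-verified Lean document; each statement's English description precedes it below -/
import Mathlib

section
/- Let κ and λ be the algebra endomorphisms of Z⟨a,b⟩ determined by κ(a) = a − b, κ(b) = 0, λ(a) = 0, λ(b) = b − a. Then for every element u of Z⟨a,b⟩, u = κ(u) + Σ κ(u₍₁₎) · b · u₍₂₎, where Δ(u) = Σ u₍₁₎ ⊗ u₍₂₎ is the coproduct deleting one letter of a word and splitting at that position. -/
open scoped TensorProduct

noncomputable section

/-- `Z⟨a,b⟩`, the free associative `ℤ`-algebra on two noncommuting generators,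
realized as the monoid algebra of the free monoid on two letters (letter `0` is `a`,
letter `1` is `b`). -/
abbrev FA := MonoidAlgebra ℤ (FreeMonoid (Fin 2))

def ofW (w : FreeMonoid (Fin 2)) : FA := MonoidAlgebra.of ℤ (FreeMonoid (Fin 2)) w

/-- The letter-deleting coproduct on a word: delete one letter and split there. -/
def deltaWord (w : FreeMonoid (Fin 2)) : FA ⊗[ℤ] FA :=
  ∑ i ∈ Finset.range w.length,
    ofW (FreeMonoid.ofList (w.toList.take i)) ⊗ₜ[ℤ]
      ofW (FreeMonoid.ofList (w.toList.drop (i + 1)))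

/-- The coproduct `Δ` on `Z⟨a,b⟩`, extended linearly from words. -/
def Delta : FA →ₗ[ℤ] FA ⊗[ℤ] FA :=
  Finsupp.lsum ℤ (fun w => LinearMap.toSpanSingleton ℤ _ (deltaWord w)) ∘ₗ
    (MonoidAlgebra.coeffLinearEquiv ℤ).toLinearMap


/-- The generator `a`. -/
def av : FA := ofW (FreeMonoid.of 0)
/-- The generator `b`. -/
def bv : FA := ofW (FreeMonoid.of 1)

/-- The algebra endomorphism `κ` of `Z⟨a,b⟩` with `κ(a) = a - b` and `κ(b) = 0`. -/
def kappa : FA →ₐ[ℤ] FA :=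
  MonoidAlgebra.lift ℤ FA (FreeMonoid (Fin 2))
    (FreeMonoid.lift fun i => if i = 0 then av - bv else 0)


/-!
Induction on words. Deleting the first letter `x` of `x w` contributes `1 ⊗ w`; every other
deletion carries `x` along in the left tensor factor, where `κ` turns it into `κ(x)`. Thus the
right-hand side for `x w` equals `κ(x) · (κ(w) + Σ κ(w₍₁₎) b w₍₂₎) + b w = (κ(x) + b) w`, and
`κ(x) + b = x` for both letters.
-/

lemma ofW_mul (v w : FreeMonoid (Fin 2)) : ofW (v * w) = ofW v * ofW w := map_mul _ v w

lemma Delta_ofW (w : FreeMonoid (Fin 2)) : Delta (ofW w) = deltaWord w := by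
  simp [Delta, ofW, MonoidAlgebra.of_apply, MonoidAlgebra.coeffLinearEquiv,
    MonoidAlgebra.coeff_single]

lemma deltaWord_of_mul (x : Fin 2) (w : FreeMonoid (Fin 2)) :
    deltaWord (FreeMonoid.of x * w) =
      1 ⊗ₜ ofW w + TensorProduct.map (LinearMap.mulLeft ℤ (ofW (FreeMonoid.of x))) LinearMap.id
        (deltaWord w) := by
  rw [deltaWord, FreeMonoid.length_mul, FreeMonoid.length_of, add_comm, Finset.sum_range_succ',
    deltaWord, map_sum, add_comm]
  congr 1
  refine Finset.sum_congr rfl fun i _ => ?_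
  simp [FreeMonoid.toList_mul, FreeMonoid.toList_of, ofW_mul]

def kappaSplit : FA ⊗[ℤ] FA →ₗ[ℤ] FA :=
  LinearMap.mul' ℤ FA ∘ₗ
    TensorProduct.map (LinearMap.mulRight ℤ bv ∘ₗ kappa.toLinearMap) LinearMap.id

@[simp]
lemma kappaSplit_tmul (p q : FA) : kappaSplit (p ⊗ₜ q) = kappa p * bv * q := rfl

lemma kappaSplit_map_mulLeft (c : FA) (z : FA ⊗[ℤ] FA) :
    kappaSplit (TensorProduct.map (LinearMap.mulLeft ℤ c) LinearMap.id z) =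
      kappa c * kappaSplit z := by
  induction z using TensorProduct.induction_on with
  | zero => simp
  | tmul p q => simp [mul_assoc]
  | add y z hy hz => simp only [map_add, hy, hz, mul_add]

lemma kappa_ofW_of_add_bv (x : Fin 2) :
    kappa (ofW (FreeMonoid.of x)) + bv = ofW (FreeMonoid.of x) := by
  fin_cases x <;> simp [kappa, av, bv, ofW]

lemma ofW_eq_kappa_add_kappaSplit (w : FreeMonoid (Fin 2)) :
    ofW w = kappa (ofW w) + kappaSplit (deltaWord w) := by
  induction w using FreeMonoid.inductionOn' with
  | one => simp [deltaWord, show ofW 1 = 1 from map_one _]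
  | of_mul x w ih =>
    calc ofW (FreeMonoid.of x * w)
        = (kappa (ofW (FreeMonoid.of x)) + bv) * ofW w := by rw [kappa_ofW_of_add_bv, ofW_mul]
      _ = kappa (ofW (FreeMonoid.of x)) * (kappa (ofW w) + kappaSplit (deltaWord w)) +
            bv * ofW w := by rw [← ih, add_mul]
      _ = kappa (ofW (FreeMonoid.of x * w)) + kappaSplit (deltaWord (FreeMonoid.of x * w)) := by
        rw [deltaWord_of_mul, map_add, kappaSplit_map_mulLeft, kappaSplit_tmul, ofW_mul, map_mul,
          map_one, one_mul, mul_add]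
        abel

/-- `u = κ(u) + Σ κ(u₍₁₎) · b · u₍₂₎`. -/
theorem kappa_identity (u : FA) :
    u = kappa u +
      LinearMap.mul' ℤ FA
        (TensorProduct.map (LinearMap.mulRight ℤ bv ∘ₗ kappa.toLinearMap) LinearMap.id
          (Delta u)) := by
  change u = kappa u + kappaSplit (Delta u)
  induction u using MonoidAlgebra.induction_on with
  | of w => exact Delta_ofW w ▸ ofW_eq_kappa_add_kappaSplit w
  | add u v hu hv => rw [map_add, map_add, map_add, add_add_add_comm, ← hu, ← hv]
  | smul n u hu => rw [map_smul, map_smul, map_smul, ← smul_add, ← hu]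

end
end

section
/- Let G be a labeled acyclic locally finite digraph. For x ≤ y define R̃_{x,y}(q) = Σ_p q^{ℓ(p)} over rising paths p from x to y, and F̃_{x,y}(q) = Σ_p q^{ℓ(p)} over falling paths from x to y (with R̃_{x,x} = F̃_{x,x} = 1). Then for all x ≤ y: Σ_{x ≤ z ≤ y} R̃_{x,z}(q) · F̃_{z,y}(−q) = δ_{x,y}. -/
/-- A labeled digraph: vertices, (multi-)edges with tail, head and labels in a set
`Λ` carrying a relation `rel`. -/
structure LDigraph where
  V : Type
  E : Type
  Λ : Type
  tail : E → V
  head : E → V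
  lab : E → Λ
  rel : Λ → Λ → Prop

namespace LDigraph

variable (G : LDigraph)

/-- `IsPath x p y`: `p` is a directed path from `x` to `y` (the empty path requires `x = y`). -/
def IsPath : G.V → List G.E → G.V → Prop
  | x, [], y => x = y
  | x, e :: p, y => G.tail e = x ∧ IsPath (G.head e) p y

/-- `x ≤ y`: there is a directed path from `x` to `y`. -/
def Reaches (x y : G.V) : Prop := ∃ p, G.IsPath x p y

/-- `x < y` in the order induced by directed paths. -/
def Lt (x y : G.V) : Prop := G.Reaches x y ∧ x ≠ y

/-- The digraph has no (nonempty) directed cycles. -/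
def Acyclic : Prop := ∀ (x : G.V) (p : List G.E), p ≠ [] → ¬ G.IsPath x p x

/-- There are finitely many directed paths between any two vertices. -/
def LocallyFinite : Prop := ∀ x y : G.V, {p | G.IsPath x p y}.Finite

/-- A rising path: any two consecutive edge labels are related. -/
def Rising (p : List G.E) : Prop := List.Chain' (fun e f => G.rel (G.lab e) (G.lab f)) p

/-- A falling path: no two consecutive edge labels are related. -/
def Falling (p : List G.E) : Prop := List.Chain' (fun e f => ¬ G.rel (G.lab e) (G.lab f)) p

open Classical in
/-- The descent word `u(p)` of a path, as an `ab`-monomial in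
`Z⟨a,b⟩ = MonoidAlgebra ℤ (FreeMonoid (Fin 2))`; the letter `0` is `a` (ascent) and the
letter `1` is `b` (descent). -/
noncomputable def word (p : List G.E) : MonoidAlgebra ℤ (FreeMonoid (Fin 2)) :=
  MonoidAlgebra.of ℤ (FreeMonoid (Fin 2)) (FreeMonoid.ofList
    ((p.zip p.tail).map fun q => if G.rel (G.lab q.1) (G.lab q.2) then (0 : Fin 2) else 1))

/-- The `ab`-index `Ψ([x,y]) = Σ_p u(p)`, summing descent words over all directed
paths from `x` to `y`. -/
noncomputable def Psi (x y : G.V) : MonoidAlgebra ℤ (FreeMonoid (Fin 2)) :=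
  ∑ᶠ (p : List G.E) (_ : G.IsPath x p y), G.word p

end LDigraph

namespace LDigraph

variable (G : LDigraph)

/-- `R̃_{x,y}(q) = Σ_p q^{ℓ(p)}` over rising paths `p` from `x` to `y`
(the empty path gives `R̃_{x,x} = 1`). -/
noncomputable def Rpoly (x y : G.V) : Polynomial ℤ :=
  ∑ᶠ (p : List G.E) (_ : G.IsPath x p y ∧ G.Rising p), Polynomial.X ^ p.length

/-- `F̃_{x,y}(q) = Σ_p q^{ℓ(p)}` over falling paths `p` from `x` to `y`
(the empty path gives `F̃_{x,x} = 1`). -/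
noncomputable def Fpoly (x y : G.V) : Polynomial ℤ :=
  ∑ᶠ (p : List G.E) (_ : G.IsPath x p y ∧ G.Falling p), Polynomial.X ^ p.length

end LDigraph

/-!
Expanding the products, the left-hand side is a signed count of pairs `(r, f)` with `r ++ f` a
path from `x` to `y`, `r` rising and `f` falling, the pair weighted by
`q ^ ℓ(r) * (-q) ^ ℓ(f)`. Moving the edge at the junction of `r` and `f` to the other side (the
first edge of `f` joins `r` if it keeps `r` rising, otherwise the last edge of `r` joins `f`) is an
involution on these pairs that keeps `r ++ f` and changes `ℓ(f)` by one, hence reverses the sign.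
Its only fixed point is `([], [])`, which occurs only for `x = y`, and by acyclicity it is then
the only pair.
-/

theorem finite_setOf_append_eq {α : Type*} (l : List α) :
    {a : List α × List α | a.1 ++ a.2 = l}.Finite :=
  (Set.finite_range fun n : Fin (l.length + 1) => (l.take n, l.drop n)).subset fun a ha =>
    ⟨⟨a.1.length, by rw [← ha, List.length_append]; omega⟩, by subst ha; simp⟩

theorem finsum_mem_mul_finsum_mem {ι κ R : Type*} [NonUnitalNonAssocSemiring R] {s : Set ι}
    {t : Set κ} (hs : s.Finite) (ht : t.Finite) (f : ι → R) (g : κ → R) :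
    (∑ᶠ i ∈ s, f i) * ∑ᶠ j ∈ t, g j = ∑ᶠ p ∈ s ×ˢ t, f p.1 * g p.2 := by
  rw [finsum_mem_eq_finite_toFinset_sum _ hs, finsum_mem_eq_finite_toFinset_sum _ ht,
    finsum_mem_eq_finite_toFinset_sum _ (hs.prod ht), ← Set.Finite.toFinset_prod,
    Finset.sum_mul_sum, Finset.sum_product]

theorem finsum_mem_eq_zero_of_involution {α R : Type*} [NonAssocRing R] [NoZeroDivisors R]
    [CharZero R] {s : Set α} {f : α → R} (hs : s.Finite) (σ : α → α)
    (hσ_mem : ∀ a ∈ s, σ a ∈ s) (hσσ : ∀ a ∈ s, σ (σ a) = a)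
    (hf : ∀ a ∈ s, f (σ a) = -f a) :
    ∑ᶠ a ∈ s, f a = 0 := by
  rw [finsum_mem_eq_finite_toFinset_sum _ hs]
  refine Finset.sum_involution (fun a _ => σ a) ?_ ?_ ?_ ?_ <;>
    simp_rw [Set.Finite.mem_toFinset]
  · intro a ha
    rw [hf a ha, add_neg_cancel]
  · intro a ha hfa hσa
    exact hfa (CharZero.eq_neg_self_iff.mp (by simpa only [hσa] using hf a ha))
  · exact hσ_mem
  · exact hσσ

theorem Polynomial.finsum_mem_comp {ι R : Type*} [CommSemiring R] {s : Set ι} (hs : s.Finite)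
    (f : ι → Polynomial R) (q : Polynomial R) :
    (∑ᶠ i ∈ s, f i).comp q = ∑ᶠ i ∈ s, (f i).comp q :=
  (Polynomial.compRingHom q).toAddMonoidHom.map_finsum_mem f hs

section JunctionSwap

variable {α : Type*} (ρ : α → α → Prop) [DecidableRel ρ]

def IsRisingFalling (a : List α × List α) : Prop :=
  a.1.IsChain ρ ∧ a.2.IsChain fun e f => ¬ ρ e f

/-- The junction swap on pairs whose first component is stored reversed, so that the last edge
of the rising part is its head. -/
def junctionSwapRev : List α × List α → List α × List α
  | (e :: s, g :: f) => if ρ e g then (g :: e :: s, f) else (s, e :: g :: f)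
  | (e :: s, []) => (s, [e])
  | ([], g :: f) => ([g], f)
  | ([], []) => ([], [])

def junctionSwap (a : List α × List α) : List α × List α :=
  ((junctionSwapRev ρ (a.1.reverse, a.2)).1.reverse, (junctionSwapRev ρ (a.1.reverse, a.2)).2)

theorem junctionSwap_reverse (s f : List α) :
    junctionSwap ρ (s.reverse, f) =
      ((junctionSwapRev ρ (s, f)).1.reverse, (junctionSwapRev ρ (s, f)).2) := by
  simp [junctionSwap]

theorem junctionSwap_append (a : List α × List α) :
    (junctionSwap ρ a).1 ++ (junctionSwap ρ a).2 = a.1 ++ a.2 := by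
  obtain ⟨r, f⟩ := a
  obtain ⟨s, rfl⟩ : ∃ s, r = s.reverse := ⟨r.reverse, r.reverse_reverse.symm⟩
  rw [junctionSwap_reverse]
  rcases s with _ | ⟨e, s⟩ <;> rcases f with _ | ⟨g, f⟩ <;> simp only [junctionSwapRev] <;>
    (try split_ifs) <;> simp

theorem pow_mul_neg_pow_junctionSwap {R : Type*} [CommRing R] (q : R) {a : List α × List α}
    (ha : a ≠ ([], [])) :
    q ^ (junctionSwap ρ a).1.length * (-q) ^ (junctionSwap ρ a).2.length =
      -(q ^ a.1.length * (-q) ^ a.2.length) := by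
  obtain ⟨r, f⟩ := a
  obtain ⟨s, rfl⟩ : ∃ s, r = s.reverse := ⟨r.reverse, r.reverse_reverse.symm⟩
  rw [junctionSwap_reverse]
  rcases s with _ | ⟨e, s⟩ <;> rcases f with _ | ⟨g, f⟩ <;> simp only [junctionSwapRev] <;>
    (try split_ifs) <;> simp_all [pow_succ] <;> ring

variable {ρ}

theorem IsRisingFalling.junctionSwap {a : List α × List α} (h : IsRisingFalling ρ a) :
    IsRisingFalling ρ (junctionSwap ρ a) := by
  obtain ⟨r, f⟩ := a
  obtain ⟨s, rfl⟩ : ∃ s, r = s.reverse := ⟨r.reverse, r.reverse_reverse.symm⟩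
  rw [junctionSwap_reverse]
  simp only [IsRisingFalling, List.isChain_reverse] at h ⊢
  rcases s with _ | ⟨e, s⟩ <;> rcases f with _ | ⟨g, f⟩ <;> simp only [junctionSwapRev] <;>
    (try split_ifs) <;> simp_all [List.isChain_cons]

theorem junctionSwap_junctionSwap {a : List α × List α} (h : IsRisingFalling ρ a) :
    junctionSwap ρ (junctionSwap ρ a) = a := by
  obtain ⟨r, f⟩ := a
  obtain ⟨s, rfl⟩ : ∃ s, r = s.reverse := ⟨r.reverse, r.reverse_reverse.symm⟩
  rw [junctionSwap_reverse, junctionSwap_reverse]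
  simp only [IsRisingFalling, List.isChain_reverse] at h
  rcases s with _ | ⟨e, _ | ⟨d, s⟩⟩ <;> rcases f with _ | ⟨g, _ | ⟨g', f⟩⟩ <;>
    simp only [junctionSwapRev] <;> (try split_ifs) <;> simp_all [List.isChain_cons]

end JunctionSwap

namespace LDigraph

variable {G : LDigraph}

theorem IsPath.right_unique {x y y' : G.V} : ∀ {p : List G.E},
    G.IsPath x p y → G.IsPath x p y' → y = y'
  | [], h, h' => h.symm.trans h'
  | _ :: _, h, h' => IsPath.right_unique h.2 h'.2

theorem isPath_append_iff : ∀ {x y : G.V} {p q : List G.E},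
    G.IsPath x (p ++ q) y ↔ ∃ z, G.IsPath x p z ∧ G.IsPath z q y
  | x, _, [], _ => ⟨fun h => ⟨x, rfl, h⟩, fun ⟨_, hp, hq⟩ => hp ▸ hq⟩
  | _, _, _ :: _, _ => by simp only [IsPath, List.cons_append, isPath_append_iff]; grind

variable (G) in
def risingFallingSplits (x y : G.V) : Set (List G.E × List G.E) :=
  {a | G.IsPath x (a.1 ++ a.2) y ∧ G.Rising a.1 ∧ G.Falling a.2}

theorem LocallyFinite.finite_setOf_isPath_append (h : G.LocallyFinite) (x y : G.V) :
    {a : List G.E × List G.E | G.IsPath x (a.1 ++ a.2) y}.Finite :=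
  ((h x y).biUnion fun l _ => finite_setOf_append_eq l).subset fun _ ha =>
    Set.mem_biUnion ha rfl

theorem LocallyFinite.finite_risingFallingSplits (h : G.LocallyFinite) (x y : G.V) :
    (G.risingFallingSplits x y).Finite :=
  (h.finite_setOf_isPath_append x y).subset fun _ ha => ha.1

theorem LocallyFinite.finite_setOf_reaches_reaches (h : G.LocallyFinite) (x y : G.V) :
    {z | G.Reaches x z ∧ G.Reaches z y}.Finite := by
  refine ((h.finite_setOf_isPath_append x y).biUnion fun a _ =>
    Set.Subsingleton.finite (s := {z | G.IsPath x a.1 z}) fun _ hz _ hz' =>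
      hz.right_unique hz').subset ?_
  rintro z ⟨⟨p, hp⟩, ⟨q, hq⟩⟩
  exact Set.mem_biUnion (x := (p, q)) (isPath_append_iff.mpr ⟨z, hp, hq⟩) hp

open Polynomial

theorem Rpoly_mul_Fpoly_comp_neg (h : G.LocallyFinite) (x z y : G.V) :
    G.Rpoly x z * (G.Fpoly z y).comp (-X) =
      ∑ᶠ a ∈ {r | G.IsPath x r z ∧ G.Rising r} ×ˢ {f | G.IsPath z f y ∧ G.Falling f},
        X ^ a.1.length * (-X : ℤ[X]) ^ a.2.length := by
  have hR : {r | G.IsPath x r z ∧ G.Rising r}.Finite := (h x z).subset fun _ hr => hr.1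
  have hF : {f | G.IsPath z f y ∧ G.Falling f}.Finite := (h z y).subset fun _ hf => hf.1
  change (∑ᶠ r ∈ {r | G.IsPath x r z ∧ G.Rising r}, X ^ r.length) *
    (∑ᶠ f ∈ {f | G.IsPath z f y ∧ G.Falling f}, X ^ f.length).comp (-X) = _
  simp only [finsum_mem_comp hF, X_pow_comp]
  exact finsum_mem_mul_finsum_mem hR hF _ _

theorem finsum_Rpoly_mul_Fpoly_comp_neg (h : G.LocallyFinite) (x y : G.V) :
    ∑ᶠ (z : G.V) (_ : G.Reaches x z ∧ G.Reaches z y),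
        G.Rpoly x z * (G.Fpoly z y).comp (-X) =
      ∑ᶠ a ∈ G.risingFallingSplits x y, X ^ a.1.length * (-X : ℤ[X]) ^ a.2.length := by
  set B : G.V → Set (List G.E × List G.E) := fun z =>
    {r | G.IsPath x r z ∧ G.Rising r} ×ˢ {f | G.IsPath z f y ∧ G.Falling f}
  have hB : ∀ z, B z ⊆ G.risingFallingSplits x y := fun z a ⟨⟨hr, hr'⟩, hf, hf'⟩ =>
    ⟨isPath_append_iff.mpr ⟨z, hr, hf⟩, hr', hf'⟩
  have hdisj : {z | G.Reaches x z ∧ G.Reaches z y}.PairwiseDisjoint B :=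
    fun z _ z' _ hne => Set.disjoint_left.mpr fun _ ha ha' => hne (ha.1.1.right_unique ha'.1.1)
  have hunion :
      G.risingFallingSplits x y = ⋃ z ∈ {z | G.Reaches x z ∧ G.Reaches z y}, B z := by
    refine subset_antisymm (fun a ⟨hp, hr, hf⟩ => ?_) (Set.iUnion₂_subset fun z _ => hB z)
    obtain ⟨z, hpz, hzq⟩ := isPath_append_iff.mp hp
    exact Set.mem_biUnion ⟨⟨_, hpz⟩, ⟨_, hzq⟩⟩ ⟨⟨hpz, hr⟩, hzq, hf⟩
  rw [hunion, finsum_mem_biUnion hdisj (h.finite_setOf_reaches_reaches x y)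
    fun z _ => (h.finite_risingFallingSplits x y).subset (hB z)]
  exact finsum_congr fun z => finsum_congr fun _ => Rpoly_mul_Fpoly_comp_neg h x z y

theorem risingFallingSplits_self (hG : G.Acyclic) (x : G.V) :
    G.risingFallingSplits x x = {([], [])} := by
  ext ⟨r, f⟩
  refine ⟨fun ⟨hp, _⟩ => ?_, fun ha => ?_⟩
  · by_contra hne
    exact hG x (r ++ f) (by simpa using hne) hp
  · obtain ⟨rfl, rfl⟩ := Prod.ext_iff.mp ha
    exact ⟨rfl, .nil, .nil⟩

theorem finsum_risingFallingSplits_of_ne (h : G.LocallyFinite) {x y : G.V} (hxy : x ≠ y) :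
    ∑ᶠ a ∈ G.risingFallingSplits x y, X ^ a.1.length * (-X : ℤ[X]) ^ a.2.length = 0 := by
  classical
  let ρ : G.E → G.E → Prop := fun e f => G.rel (G.lab e) (G.lab f)
  refine finsum_mem_eq_zero_of_involution (h.finite_risingFallingSplits x y) (junctionSwap ρ)
    ?_ ?_ ?_
  · rintro a ⟨hp, hrf⟩
    exact ⟨junctionSwap_append ρ a ▸ hp, IsRisingFalling.junctionSwap hrf⟩
  · exact fun a ha => junctionSwap_junctionSwap ha.2
  · rintro a ⟨hp, -⟩
    exact pow_mul_neg_pow_junctionSwap ρ X fun ha => hxy (by rwa [ha] at hp)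

end LDigraph

open Classical in
theorem R_F_inverse_general (G : LDigraph) (hacyclic : G.Acyclic) (hlocfin : G.LocallyFinite)
    (x y : G.V) :
    ∑ᶠ (z : G.V) (_ : G.Reaches x z ∧ G.Reaches z y),
        G.Rpoly x z * (G.Fpoly z y).comp (-Polynomial.X) =
      if x = y then 1 else 0 := by
  rw [LDigraph.finsum_Rpoly_mul_Fpoly_comp_neg hlocfin]
  split_ifs with hxy
  · subst hxy
    simp [LDigraph.risingFallingSplits_self hacyclic]
  · exact LDigraph.finsum_risingFallingSplits_of_ne hlocfin hxy

open Classical in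
/-- Lemma 6.6: `Σ_{x ≤ z ≤ y} R̃_{x,z}(q) · F̃_{z,y}(−q) = δ_{x,y}`. -/
theorem R_F_inverse (G : LDigraph) (hacyclic : G.Acyclic) (hlocfin : G.LocallyFinite)
    (x y : G.V) (hxy : G.Reaches x y) :
    ∑ᶠ (z : G.V) (_ : G.Reaches x z ∧ G.Reaches z y),
        G.Rpoly x z * (G.Fpoly z y).comp (-Polynomial.X) =
      if x = y then 1 else 0 :=
  R_F_inverse_general G hacyclic hlocfin x y
end
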